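/- arXiv:2505.09765 — 2 statements merged into one kernel-verified Lean document; each statement's English description precedes it below -/
import Mathlib

section
/- The generalized Peaceman–Rachford splitting algorithm for min_{u∈V} F(u) + Σ_{j=1}^J G_j(B_j u) is a dualization of the successive subspace correction method applied to the dual problem min_{(p₁,…,p_J)} F*(−Σ_j B_jᵗp_j) + Σ_j G_j*(p_j): if u^{(0)} = ∇F*(−Σ_j B_jᵗp_j^{(0)}) and v_j^{(0)} = −B_jᵗp_j^{(0)} for every j, then u^{(n)} = ∇F*(−Σ_j B_jᵗp_j^{(n)}) and v_j^{(n)} = −B_jᵗp_j^{(n)} for all n ≥ 1 and every j. -/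
open scoped RealInnerProductSpace

noncomputable section

/-- The Legendre–Fenchel conjugate of an extended-real-valued function. -/
def fenchelConj {E : Type*} [NormedAddCommGroup E] [InnerProductSpace ℝ E]
    (F : E → EReal) (x : E) : EReal :=
  ⨆ u : E, (((⟪x, u⟫ : ℝ) : EReal) - F u)

/-- The Legendre–Fenchel conjugate of a real-valued function. -/
def fenchelConjR {E : Type*} [NormedAddCommGroup E] [InnerProductSpace ℝ E]
    (F : E → ℝ) (x : E) : EReal :=
  ⨆ u : E, ((⟪x, u⟫ - F u : ℝ) : EReal)

/-- Properness of an extended-real-valued function. -/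
def ProperFn {E : Type*} (F : E → EReal) : Prop :=
  (∃ u, F u ≠ ⊤) ∧ ∀ u, F u ≠ ⊥

/-- Convexity of an extended-real-valued function. -/
def ConvexFn {E : Type*} [AddCommGroup E] [Module ℝ E] (F : E → EReal) : Prop :=
  ∀ u v : E, ∀ t : ℝ, 0 ≤ t → t ≤ 1 →
    F ((1 - t) • u + t • v) ≤ ((1 - t : ℝ) : EReal) * F u + ((t : ℝ) : EReal) * F v

/-! Each Peaceman–Rachford substep `j` is the primal problem `min_u F(u) - ⟪c, u⟫ + Gⱼ(Bⱼu)` (the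
Bregman term absorbs everything but a linear term), and the matching SSC substep is its
Fenchel–Rockafellar dual `min_p F*(c - Bⱼᵗp) + Gⱼ*(p)`, where `c` collects the other blocks.
Strong convexity of `F` makes `F*` smooth, so optimality of the dual minimizer `p⋆` says
`Bⱼ∇F*(c - Bⱼᵗp⋆) ∈ ∂Gⱼ*(p⋆)`; by Fenchel–Moreau the duality gap vanishes at `∇F*(c - Bⱼᵗp⋆)`,
and strong convexity again forces the primal minimizer to be that point. Along a sweep this keeps
`∇F(u) = -∑ᵢ Bᵢᵗpᵢ` with the blocks already visited taken from the new dual iterate, and the update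
of `vⱼ` then reads `vⱼ = -Bⱼᵗpⱼ`. -/

open Set Filter Topology

section Legendre

variable {V : Type*} [NormedAddCommGroup V] [InnerProductSpace ℝ V] [CompleteSpace V]

theorem StrongConvexOn.add_inner_add_sq_le {F : V → ℝ} {μ : ℝ} {g u : V}
    (hF : StrongConvexOn univ μ F) (hg : HasGradientAt F g u) (x : V) :
    F u + ⟪g, x - u⟫ + μ / 2 * ‖x - u‖ ^ 2 ≤ F x := by
  set d := x - u
  have hline : HasDerivAt (fun t : ℝ => F (u + t • d)) ⟪g, d⟫ 0 := by
    have hpath : HasDerivAt (fun t : ℝ => u + t • d) d 0 := by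
      simpa using ((hasDerivAt_id (0 : ℝ)).smul_const d).const_add u
    have h := hg.hasFDerivAt.comp_hasDerivAt_of_eq 0 hpath (by simp)
    rwa [InnerProductSpace.toDual_apply_apply] at h
  have hslope : ∀ t ∈ Ioo (0 : ℝ) 1,
      slope (fun t : ℝ => F (u + t • d)) 0 t ≤ F x - F u - (1 - t) * (μ / 2 * ‖d‖ ^ 2) := by
    rintro t ⟨ht0, ht1⟩
    have h := hF.2 (mem_univ u) (mem_univ x) (sub_nonneg.2 ht1.le) ht0.le (sub_add_cancel 1 t)
    rw [show (1 - t) • u + t • x = u + t • d by simp only [d, smul_sub, sub_smul, one_smul]; abel,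
      norm_sub_rev, smul_eq_mul, smul_eq_mul] at h
    rw [slope_def_field, zero_smul, add_zero, sub_zero, div_le_iff₀ ht0]
    nlinarith
  have hlim : Tendsto (slope (fun t : ℝ => F (u + t • d)) 0) (𝓝[>] 0) (𝓝 ⟪g, d⟫) :=
    (hasDerivAt_iff_tendsto_slope.1 hline).mono_left
      (nhdsWithin_mono _ fun t ht => ne_of_gt ht)
  have hbound : Tendsto (fun t : ℝ => F x - F u - (1 - t) * (μ / 2 * ‖d‖ ^ 2)) (𝓝[>] 0)
      (𝓝 (F x - F u - (1 - 0) * (μ / 2 * ‖d‖ ^ 2))) :=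
    ((by fun_prop : Continuous fun t : ℝ => F x - F u - (1 - t) * (μ / 2 * ‖d‖ ^ 2)).tendsto
      0).mono_left nhdsWithin_le_nhds
  have := le_of_tendsto_of_tendsto hlim hbound (eventually_of_mem (Ioo_mem_nhdsGT one_pos) hslope)
  linarith

variable {F : V → ℝ} {gradF gradFstar : V → V} {μ : ℝ}

/-- The closed form of the conjugate `F*` when `gradFstar` is a right inverse of `∇F`. -/
def legendreTransform (F : V → ℝ) (gradFstar : V → V) (y : V) : ℝ :=
  ⟪y, gradFstar y⟫ - F (gradFstar y)

theorem inner_sub_add_sq_le_legendreTransform (hgrad : ∀ x, HasGradientAt F (gradF x) x)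
    (hsc : StrongConvexOn univ μ F) (hinv : Function.RightInverse gradFstar gradF) (y x : V) :
    ⟪y, x⟫ - F x + μ / 2 * ‖x - gradFstar y‖ ^ 2 ≤ legendreTransform F gradFstar y := by
  have h := hsc.add_inner_add_sq_le (hgrad (gradFstar y)) x
  rw [hinv y, inner_sub_right] at h
  unfold legendreTransform
  linarith

theorem inner_sub_le_legendreTransform (hgrad : ∀ x, HasGradientAt F (gradF x) x)
    (hsc : StrongConvexOn univ μ F) (hμ : 0 ≤ μ) (hinv : Function.RightInverse gradFstar gradF)
    (y x : V) : ⟪y, x⟫ - F x ≤ legendreTransform F gradFstar y := by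
  have := inner_sub_add_sq_le_legendreTransform hgrad hsc hinv y x
  nlinarith [sq_nonneg ‖x - gradFstar y‖]

theorem fenchelConjR_eq_legendreTransform (hgrad : ∀ x, HasGradientAt F (gradF x) x)
    (hsc : StrongConvexOn univ μ F) (hμ : 0 ≤ μ) (hinv : Function.RightInverse gradFstar gradF)
    (y : V) : fenchelConjR F y = legendreTransform F gradFstar y :=
  le_antisymm
    (iSup_le fun x => EReal.coe_le_coe_iff.2 (inner_sub_le_legendreTransform hgrad hsc hμ hinv y x))
    (le_iSup_of_le (gradFstar y) le_rfl)

theorem eq_of_legendreTransform_le (hgrad : ∀ x, HasGradientAt F (gradF x) x)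
    (hsc : StrongConvexOn univ μ F) (hμ : 0 < μ) (hinv : Function.RightInverse gradFstar gradF)
    {y x : V} (h : legendreTransform F gradFstar y ≤ ⟪y, x⟫ - F x) : x = gradFstar y := by
  have := inner_sub_add_sq_le_legendreTransform hgrad hsc hinv y x
  have hsq : ‖x - gradFstar y‖ ^ 2 ≤ 0 := by nlinarith
  rw [← sub_eq_zero, ← norm_eq_zero]
  nlinarith [norm_nonneg (x - gradFstar y)]

theorem legendreTransform_add_le (hgrad : ∀ x, HasGradientAt F (gradF x) x)
    (hsc : StrongConvexOn univ μ F) (hμ : 0 < μ) (hinv : Function.RightInverse gradFstar gradF)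
    (y d : V) :
    legendreTransform F gradFstar (y + d) ≤
      legendreTransform F gradFstar y + ⟪gradFstar y, d⟫ + ‖d‖ ^ 2 / (2 * μ) := by
  set a := gradFstar y
  set b := gradFstar (y + d)
  have h := inner_sub_add_sq_le_legendreTransform hgrad hsc hinv y b
  have hamgm : ⟪d, b - a⟫ ≤ ‖d‖ ^ 2 / (2 * μ) + μ / 2 * ‖b - a‖ ^ 2 := by
    rw [div_add' _ _ _ (by positivity), le_div_iff₀ (by positivity)]
    nlinarith [sq_nonneg (‖d‖ - μ * ‖b - a‖), real_inner_le_norm d (b - a)]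
  have hL : legendreTransform F gradFstar (y + d) = ⟪y, b⟫ - F b + ⟪d, a⟫ + ⟪d, b - a⟫ := by
    simp only [legendreTransform, inner_add_left, inner_sub_right]
    ring
  rw [hL, real_inner_comm a d]
  linarith

end Legendre

section Conjugate

variable {W : Type*} [NormedAddCommGroup W] [InnerProductSpace ℝ W] {G : W → EReal}

theorem coe_inner_sub_le_fenchelConj {w : W} {g : ℝ} (hw : G w = g) (q : W) :
    ((⟪q, w⟫ - g : ℝ) : EReal) ≤ fenchelConj G q := by
  rw [EReal.coe_sub, ← hw]
  exact le_iSup (fun w => ((⟪q, w⟫ : ℝ) : EReal) - G w) w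

theorem ProperFn.fenchelConj_ne_bot (hp : ProperFn G) (q : W) : fenchelConj G q ≠ ⊥ := by
  obtain ⟨w, hw⟩ := hp.1
  exact ne_bot_of_le_ne_bot (EReal.coe_ne_bot _)
    (coe_inner_sub_le_fenchelConj (EReal.coe_toReal hw (hp.2 w)).symm q)

theorem fenchelConj_le_of_forall_le {q : W} {c : ℝ}
    (h : ∀ w, ((⟪q, w⟫ + c : ℝ) : EReal) ≤ G w) : fenchelConj G q ≤ ((-c : ℝ) : EReal) :=
  iSup_le fun w => calc
    ((⟪q, w⟫ : ℝ) : EReal) - G w ≤ ((⟪q, w⟫ : ℝ) : EReal) - ((⟪q, w⟫ + c : ℝ) : EReal) :=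
      EReal.sub_le_sub le_rfl (h w)
    _ = ((-c : ℝ) : EReal) := by rw [← EReal.coe_sub]; ring_nf

theorem fenchelConj_add_smul_sub_le {p q : W} {r s t : ℝ}
    (hr : fenchelConj G p = r) (hs : fenchelConj G q = s) (ht₀ : 0 ≤ t) (ht₁ : t ≤ 1) :
    fenchelConj G (p + t • (q - p)) ≤ (((1 - t) * r + t * s : ℝ) : EReal) := by
  refine iSup_le fun w => ?_
  induction hw : G w using EReal.rec with
  | bot =>
    have h : ((⟪p, w⟫ : ℝ) : EReal) - G w ≤ fenchelConj G p := le_iSup_of_le w le_rfl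
    simp [hw, hr] at h
  | top => simp
  | coe g =>
    have hp := coe_inner_sub_le_fenchelConj hw p
    have hq := coe_inner_sub_le_fenchelConj hw q
    rw [hr, EReal.coe_le_coe_iff] at hp
    rw [hs, EReal.coe_le_coe_iff] at hq
    rw [← EReal.coe_sub, EReal.coe_le_coe_iff, inner_add_left, real_inner_smul_left,
      inner_sub_left]
    nlinarith

theorem LowerSemicontinuous.isClosed_realEpigraph {X : Type*} [TopologicalSpace X]
    {G : X → EReal} (hl : LowerSemicontinuous G) :
    IsClosed {z : X × ℝ | G z.1 ≤ z.2} :=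
  hl.isClosed_epigraph.preimage
    (continuous_fst.prodMk (continuous_coe_real_ereal.comp continuous_snd))

theorem ConvexFn.convex_realEpigraph {E : Type*} [AddCommGroup E] [Module ℝ E] {G : E → EReal}
    (hc : ConvexFn G) (hbot : ∀ w, G w ≠ ⊥) :
    Convex ℝ {z : E × ℝ | G z.1 ≤ z.2} := by
  rintro ⟨x₁, t₁⟩ h₁ ⟨x₂, t₂⟩ h₂ a b ha hb hab
  obtain rfl : a = 1 - b := by linarith
  have hG₁ := EReal.coe_toReal (ne_top_of_le_ne_top (EReal.coe_ne_top t₁) h₁) (hbot x₁)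
  have hG₂ := EReal.coe_toReal (ne_top_of_le_ne_top (EReal.coe_ne_top t₂) h₂) (hbot x₂)
  simp only [mem_ofPred_eq, Prod.smul_mk, Prod.mk_add_mk, smul_eq_mul] at h₁ h₂ ⊢
  rw [← hG₁, EReal.coe_le_coe_iff] at h₁
  rw [← hG₂, EReal.coe_le_coe_iff] at h₂
  refine (hc x₁ x₂ b hb (by linarith)).trans ?_
  rw [← hG₁, ← hG₂, ← EReal.coe_mul, ← EReal.coe_mul, ← EReal.coe_add, EReal.coe_le_coe_iff]
  nlinarith

theorem affine_minorant_of_separation {q : W} {β a : ℝ} (hβ : β < 0)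
    (hsep : ∀ (w : W) (t : ℝ), G w ≤ t → ⟪q, w⟫ + β * t < a) (w : W) :
    ((⟪(-β⁻¹) • q, w⟫ + β⁻¹ * a : ℝ) : EReal) ≤ G w := by
  refine EReal.le_of_forall_lt_iff_le.1 fun t ht => EReal.coe_le_coe_iff.2 ?_
  have h := mul_lt_mul_of_neg_left (hsep w t ht.le) (inv_lt_zero.2 hβ)
  rw [mul_add, ← mul_assoc, inv_mul_cancel₀ hβ.ne, one_mul] at h
  rw [real_inner_smul_left]
  linarith

variable [CompleteSpace W]

theorem ProperFn.exists_separation (hp : ProperFn G) (hc : ConvexFn G) (hl : LowerSemicontinuous G)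
    {w₀ : W} {r : ℝ} (hr : (r : EReal) < G w₀) :
    ∃ (q : W) (β a : ℝ), β ≤ 0 ∧ (∀ (w : W) (t : ℝ), G w ≤ t → ⟪q, w⟫ + β * t < a) ∧
      a < ⟪q, w₀⟫ + β * r := by
  obtain ⟨f, a, hsep, hw₀⟩ := geometric_hahn_banach_closed_point (hc.convex_realEpigraph hp.2)
    hl.isClosed_realEpigraph (x := (w₀, r)) (not_le.2 hr)
  obtain ⟨q, hq⟩ : ∃ q : W, ∀ w, ⟪q, w⟫ = f (w, 0) :=
    ⟨(InnerProductSpace.toDual ℝ W).symm (f.comp (ContinuousLinearMap.inl ℝ W ℝ)), by simp⟩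
  obtain ⟨β, hβ⟩ : ∃ β, f (0, 1) = β := ⟨_, rfl⟩
  have hf : ∀ w t, f (w, t) = ⟪q, w⟫ + β * t := by
    intro w t
    have : ((w, t) : W × ℝ) = (w, 0) + t • ((0 : W), (1 : ℝ)) := by simp
    rw [this, map_add, map_smul, smul_eq_mul, hq, hβ, mul_comm]
  simp only [hf] at hsep hw₀
  refine ⟨q, β, a, ?_, fun w t h => hsep (w, t) h, hw₀⟩
  -- the epigraph contains a vertical half-line, along which `f` must stay below `a`
  obtain ⟨w₁, hw₁⟩ := hp.1
  obtain ⟨g₁, hg₁⟩ : ∃ g : ℝ, G w₁ = g := ⟨_, (EReal.coe_toReal hw₁ (hp.2 w₁)).symm⟩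
  by_contra! hβ₀
  have h := hsep (w₁, max g₁ ((a - ⟪q, w₁⟫) / β))
    (by rw [mem_ofPred_eq, hg₁, EReal.coe_le_coe_iff]; exact le_max_left _ _)
  have := (div_le_iff₀ hβ₀).1 (le_max_right g₁ ((a - ⟪q, w₁⟫) / β))
  linarith

theorem ProperFn.exists_affine_minorant (hp : ProperFn G) (hc : ConvexFn G)
    (hl : LowerSemicontinuous G) : ∃ (q : W) (c : ℝ), ∀ w, ((⟪q, w⟫ + c : ℝ) : EReal) ≤ G w := by
  obtain ⟨w₁, hw₁⟩ := hp.1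
  obtain ⟨g₁, hg₁⟩ : ∃ g : ℝ, G w₁ = g := ⟨_, (EReal.coe_toReal hw₁ (hp.2 w₁)).symm⟩
  obtain ⟨q, β, a, -, hsep, hstrict⟩ := hp.exists_separation hc hl (w₀ := w₁) (r := g₁ - 1)
    (by rw [hg₁, EReal.coe_lt_coe_iff]; linarith)
  -- `(w₁, G w₁)` lies in the epigraph, so the separating hyperplane is not vertical
  have hβ₀ : β < 0 := by
    have := hsep w₁ g₁ hg₁.le
    nlinarith
  exact ⟨_, _, affine_minorant_of_separation hβ₀ hsep⟩

/-- `G` is the supremum of its affine minorants. -/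
theorem ProperFn.exists_affine_minorant_gt (hp : ProperFn G) (hc : ConvexFn G)
    (hl : LowerSemicontinuous G) {w₀ : W} {r : ℝ} (hr : (r : EReal) < G w₀) :
    ∃ (q : W) (c : ℝ), (∀ w, ((⟪q, w⟫ + c : ℝ) : EReal) ≤ G w) ∧ r < ⟪q, w₀⟫ + c := by
  obtain ⟨q, β, a, hβ, hsep, hw₀⟩ := hp.exists_separation hc hl hr
  rcases hβ.lt_or_eq with hβ | rfl
  · refine ⟨_, _, affine_minorant_of_separation hβ hsep, ?_⟩
    have h := mul_lt_mul_of_neg_left hw₀ (inv_lt_zero.2 hβ)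
    rw [mul_add, ← mul_assoc, inv_mul_cancel₀ hβ.ne, one_mul] at h
    rw [real_inner_smul_left]
    linarith
  · -- a vertical hyperplane: tilt an arbitrary affine minorant by a large multiple of it
    obtain ⟨q₀, c₀, hq₀⟩ := hp.exists_affine_minorant hc hl
    simp only [zero_mul, add_zero] at hsep hw₀
    set δ := ⟪q, w₀⟫ - a
    set k := (|r - (⟪q₀, w₀⟫ + c₀)| + 1) / δ
    have hδ : 0 < δ := by linarith
    have hk : 0 ≤ k := by positivity
    have hkδ : k * δ = |r - (⟪q₀, w₀⟫ + c₀)| + 1 := div_mul_cancel₀ _ hδ.ne'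
    refine ⟨q₀ + k • q, c₀ - k * a, fun w => ?_, ?_⟩
    · refine EReal.le_of_forall_lt_iff_le.1 fun t ht => ?_
      have h₀ := (hq₀ w).trans ht.le
      rw [EReal.coe_le_coe_iff] at h₀ ⊢
      have h := hsep w t ht.le
      rw [inner_add_left, real_inner_smul_left]
      nlinarith
    · rw [inner_add_left, real_inner_smul_left]
      nlinarith [le_abs_self (r - (⟪q₀, w₀⟫ + c₀))]

/-- Fenchel–Moreau in subgradient form: `w₀ ∈ ∂G*(p)` implies `G(w₀) + G*(p) ≤ ⟪p, w₀⟫`. -/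
theorem ProperFn.le_inner_sub_of_le_fenchelConj (hp : ProperFn G) (hc : ConvexFn G)
    (hl : LowerSemicontinuous G) {w₀ p : W} {r : ℝ}
    (h : ∀ q, ((r + ⟪w₀, q - p⟫ : ℝ) : EReal) ≤ fenchelConj G q) :
    G w₀ ≤ ((⟪p, w₀⟫ - r : ℝ) : EReal) := by
  by_contra! hlt
  obtain ⟨q, c, hmin, hw₀⟩ := hp.exists_affine_minorant_gt hc hl hlt
  have := (h q).trans (fenchelConj_le_of_forall_le hmin)
  rw [EReal.coe_le_coe_iff, inner_sub_right, real_inner_comm q w₀, real_inner_comm p w₀] at this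
  linarith

end Conjugate

section Step

variable {V W : Type*} [NormedAddCommGroup V] [InnerProductSpace ℝ V] [CompleteSpace V]
  [NormedAddCommGroup W] [InnerProductSpace ℝ W]
  {F : V → ℝ} {gradF gradFstar : V → V} {μ : ℝ} {G : W → EReal}
  {B : V →ₗ[ℝ] W} {Bt : W →ₗ[ℝ] V}

/-- `B ∇F*(c - Bᵗp⋆) ∈ ∂G*(p⋆)`: the optimality condition of the smooth plus convex dual problem. -/
theorem le_fenchelConj_of_isMin_dual (hadj : ∀ x w, ⟪B x, w⟫ = ⟪x, Bt w⟫)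
    (hgrad : ∀ x, HasGradientAt F (gradF x) x) (hsc : StrongConvexOn univ μ F) (hμ : 0 < μ)
    (hinv : Function.RightInverse gradFstar gradF) {c : V} {pstar : W} {r : ℝ}
    (hr : fenchelConj G pstar = r)
    (hD : ∀ q, fenchelConjR F (c - Bt pstar) + fenchelConj G pstar ≤
      fenchelConjR F (c - Bt q) + fenchelConj G q) (q : W) :
    ((r + ⟪B (gradFstar (c - Bt pstar)), q - pstar⟫ : ℝ) : EReal) ≤ fenchelConj G q := by
  simp only [fenchelConjR_eq_legendreTransform hgrad hsc hμ.le hinv, hr] at hD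
  set y := c - Bt pstar
  set δ := Bt (q - pstar)
  set C := ‖δ‖ ^ 2 / (2 * μ)
  induction hs : fenchelConj G q using EReal.rec with
  | bot =>
    have := hD q
    rw [hs, EReal.add_bot, le_bot_iff, ← EReal.coe_add] at this
    exact absurd this (EReal.coe_ne_bot _)
  | top => exact le_top
  | coe s =>
    rw [EReal.coe_le_coe_iff, hadj]
    have hkey : ∀ t ∈ Ioo (0 : ℝ) 1, r + ⟪gradFstar y, δ⟫ ≤ s + t * C := by
      rintro t ⟨ht₀, ht₁⟩
      have hDt := (hD (pstar + t • (q - pstar))).trans (add_le_add_right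
        (fenchelConj_add_smul_sub_le hr hs ht₀.le ht₁.le) _)
      have harg : c - Bt (pstar + t • (q - pstar)) = y + (-t) • δ := by
        simp only [y, δ, map_add, map_smul]
        module
      rw [harg, ← EReal.coe_add, ← EReal.coe_add, EReal.coe_le_coe_iff] at hDt
      have hsmooth := legendreTransform_add_le hgrad hsc hμ hinv y ((-t) • δ)
      rw [real_inner_smul_right, norm_smul, mul_pow, Real.norm_eq_abs, sq_abs, neg_sq] at hsmooth
      have : t * (r + ⟪gradFstar y, δ⟫) ≤ t * (s + t * C) := by
        have : t ^ 2 * ‖δ‖ ^ 2 / (2 * μ) = t * (t * C) := by simp only [C]; ring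
        nlinarith
      exact le_of_mul_le_mul_left this ht₀
    have hlim : Tendsto (fun t : ℝ => s + t * C) (𝓝[>] 0) (𝓝 s) := by
      simpa using ((by fun_prop : Continuous fun t : ℝ => s + t * C).tendsto 0).mono_left
        nhdsWithin_le_nhds
    exact ge_of_tendsto hlim (eventually_of_mem (Ioo_mem_nhdsGT one_pos) hkey)

variable [CompleteSpace W]

theorem ProperFn.fenchelConj_ne_top_of_isMin_dual (hp : ProperFn G) (hc : ConvexFn G)
    (hl : LowerSemicontinuous G) (hgrad : ∀ x, HasGradientAt F (gradF x) x)
    (hsc : StrongConvexOn univ μ F) (hμ : 0 ≤ μ) (hinv : Function.RightInverse gradFstar gradF)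
    {c : V} {pstar : W}
    (hD : ∀ q, fenchelConjR F (c - Bt pstar) + fenchelConj G pstar ≤
      fenchelConjR F (c - Bt q) + fenchelConj G q) :
    fenchelConj G pstar ≠ ⊤ := by
  obtain ⟨q, a, hq⟩ := hp.exists_affine_minorant hc hl
  have h := (hD q).trans (add_le_add_right (fenchelConj_le_of_forall_le hq) _)
  simp only [fenchelConjR_eq_legendreTransform hgrad hsc hμ hinv, ← EReal.coe_add] at h
  intro htop
  rw [htop, EReal.coe_add_top] at h
  exact (EReal.coe_lt_top _).not_ge h

theorem eq_gradFstar_of_isMin_primal_of_isMin_dual (hadj : ∀ x w, ⟪B x, w⟫ = ⟪x, Bt w⟫)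
    (hp : ProperFn G) (hc : ConvexFn G) (hl : LowerSemicontinuous G)
    (hgrad : ∀ x, HasGradientAt F (gradF x) x) (hsc : StrongConvexOn univ μ F) (hμ : 0 < μ)
    (hinv : Function.RightInverse gradFstar gradF) {c ustar : V} {pstar : W}
    (hP : ∀ x, ((F ustar - ⟪c, ustar⟫ : ℝ) : EReal) + G (B ustar) ≤
      ((F x - ⟪c, x⟫ : ℝ) : EReal) + G (B x))
    (hD : ∀ q, fenchelConjR F (c - Bt pstar) + fenchelConj G pstar ≤
      fenchelConjR F (c - Bt q) + fenchelConj G q) :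
    ustar = gradFstar (c - Bt pstar) := by
  obtain ⟨r, hr⟩ : ∃ r : ℝ, fenchelConj G pstar = r :=
    ⟨_, (EReal.coe_toReal (hp.fenchelConj_ne_top_of_isMin_dual hc hl hgrad hsc hμ.le hinv hD)
      (hp.fenchelConj_ne_bot pstar)).symm⟩
  set y := c - Bt pstar
  set u := gradFstar y
  have hGu : G (B u) ≤ ((⟪pstar, B u⟫ - r : ℝ) : EReal) :=
    hp.le_inner_sub_of_le_fenchelConj hc hl
      (le_fenchelConj_of_isMin_dual hadj hgrad hsc hμ hinv hr hD)
  have hPu := (hP u).trans (add_le_add_right hGu _)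
  induction hg : G (B ustar) using EReal.rec with
  | bot => exact absurd hg (hp.2 _)
  | top =>
    rw [hg, EReal.add_top_of_ne_bot (EReal.coe_ne_bot _), ← EReal.coe_add] at hPu
    exact absurd hPu (EReal.coe_lt_top _).not_ge
  | coe g =>
    rw [hg, ← EReal.coe_add, ← EReal.coe_add, EReal.coe_le_coe_iff] at hPu
    have hFY := coe_inner_sub_le_fenchelConj hg pstar
    rw [hr, EReal.coe_le_coe_iff] at hFY
    refine eq_of_legendreTransform_le hgrad hsc hμ hinv ?_
    have hadj' : ∀ x, ⟪pstar, B x⟫ = ⟪Bt pstar, x⟫ := fun x => by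
      rw [real_inner_comm, hadj, real_inner_comm]
    rw [hadj'] at hPu hFY
    rw [legendreTransform, show y = c - Bt pstar from rfl, inner_sub_left, inner_sub_left]
    linarith

theorem eq_gradFstar_of_peacemanRachford_step (hadj : ∀ x w, ⟪B x, w⟫ = ⟪x, Bt w⟫)
    (hp : ProperFn G) (hc : ConvexFn G) (hl : LowerSemicontinuous G)
    (hgrad : ∀ x, HasGradientAt F (gradF x) x) (hsc : StrongConvexOn univ μ F) (hμ : 0 < μ)
    (hinv : Function.RightInverse gradFstar gradF) {c u₀ ustar : V} {p₀ pstar : W}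
    (hu₀ : gradF u₀ = c - Bt p₀)
    (hP : ∀ x, ((F ustar - F u₀ - ⟪gradF u₀, ustar - u₀⟫ + ⟪-Bt p₀, ustar⟫ : ℝ) : EReal) +
        G (B ustar) ≤ ((F x - F u₀ - ⟪gradF u₀, x - u₀⟫ + ⟪-Bt p₀, x⟫ : ℝ) : EReal) + G (B x))
    (hD : ∀ q, fenchelConjR F (c - Bt pstar) + fenchelConj G pstar ≤
      fenchelConjR F (c - Bt q) + fenchelConj G q) :
    ustar = gradFstar (c - Bt pstar) := by
  -- the Bregman term and the linear term combine into `F x - ⟪c, x⟫` up to a constant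
  have hbregman : ∀ x, F x - F u₀ - ⟪gradF u₀, x - u₀⟫ + ⟪-Bt p₀, x⟫ =
      (⟪gradF u₀, u₀⟫ - F u₀ : ℝ) + (F x - ⟪c, x⟫) := by
    intro x
    rw [inner_sub_right, inner_neg_left, hu₀, inner_sub_left, inner_sub_left]
    ring
  refine eq_gradFstar_of_isMin_primal_of_isMin_dual hadj hp hc hl hgrad hsc hμ hinv
    (fun x => ?_) hD
  have h := hP x
  rwa [hbregman, hbregman, EReal.coe_add, EReal.coe_add, add_assoc, add_assoc,
    (EReal.addLECancellable_coe _).add_le_add_iff_left] at h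

end Step

section Sweep

variable {M : Type*} [AddCommGroup M] {J : ℕ}

/-- The block sum after a Gauss–Seidel sweep has replaced the first `k` blocks `b i` by `a i`. -/
def spliceSum (a b : Fin J → M) (k : ℕ) : M :=
  ∑ i ∈ Finset.univ.filter (fun i : Fin J => i.1 < k), a i +
    ∑ i ∈ Finset.univ.filter (fun i : Fin J => k ≤ i.1), b i

theorem spliceSum_zero (a b : Fin J → M) : spliceSum a b 0 = ∑ i, b i := by
  simp [spliceSum]

theorem spliceSum_self (a b : Fin J → M) : spliceSum a b J = ∑ i, a i := by
  rw [spliceSum, Finset.filter_true_of_mem fun i _ => i.is_lt,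
    Finset.filter_false_of_mem fun i _ => not_le.2 i.is_lt, Finset.sum_empty, add_zero]

/-- The blocks other than `j`, as they stand when block `j` is updated. -/
def spliceContext (a b : Fin J → M) (j : Fin J) : M :=
  ∑ i ∈ Finset.univ.filter (· < j), a i + ∑ i ∈ Finset.univ.filter (j < ·), b i

theorem spliceSum_val (a b : Fin J → M) (j : Fin J) :
    spliceSum a b j = spliceContext a b j + b j := by
  have hle : Finset.univ.filter (fun i : Fin J => j.1 ≤ i.1) =
      insert j (Finset.univ.filter (j < ·)) := by
    ext i
    simp only [Finset.mem_filter, Finset.mem_univ, true_and, Finset.mem_insert, Fin.lt_def,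
      Fin.ext_iff]
    omega
  rw [spliceSum, spliceContext, hle, Finset.sum_insert (by simp)]
  simp only [Fin.lt_def]
  abel

theorem spliceSum_val_add_one (a b : Fin J → M) (j : Fin J) :
    spliceSum a b (j + 1) = spliceContext a b j + a j := by
  have hlt : Finset.univ.filter (fun i : Fin J => i.1 < j.1 + 1) =
      insert j (Finset.univ.filter (· < j)) := by
    ext i
    simp only [Finset.mem_filter, Finset.mem_univ, true_and, Finset.mem_insert, Fin.lt_def,
      Fin.ext_iff]
    omega
  have hge : Finset.univ.filter (fun i : Fin J => j.1 + 1 ≤ i.1) =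
      Finset.univ.filter (j < ·) := by
    ext i
    simp only [Finset.mem_filter, Finset.mem_univ, true_and, Fin.lt_def]
    omega
  rw [spliceSum, spliceContext, hlt, hge, Finset.sum_insert (by simp)]
  abel

end Sweep

section PeacemanRachford

variable {V : Type*} [NormedAddCommGroup V] [InnerProductSpace ℝ V] [CompleteSpace V]
  {J : ℕ} {W : Fin J → Type*} [∀ j, NormedAddCommGroup (W j)] [∀ j, InnerProductSpace ℝ (W j)]
  [∀ j, CompleteSpace (W j)]
  {B : ∀ j, V →ₗ[ℝ] W j} {Bt : ∀ j, W j →ₗ[ℝ] V} {G : ∀ j, W j → EReal}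
  {F : V → ℝ} {gradF gradFstar : V → V} {μ : ℝ}

theorem gradF_peacemanRachford_sweep (hadj : ∀ j x w, ⟪B j x, w⟫ = ⟪x, Bt j w⟫)
    (hG : ∀ j, ProperFn (G j) ∧ ConvexFn (G j) ∧ LowerSemicontinuous (G j))
    (hgrad : ∀ x, HasGradientAt F (gradF x) x) (hsc : StrongConvexOn Set.univ μ F) (hμ : 0 < μ)
    (hinv : Function.RightInverse gradFstar gradF)
    {u : ℕ → V} {v : Fin J → V} {p p' : ∀ j, W j}
    (humin : ∀ (j : Fin J) (x : V),
      ((F (u (j.1 + 1)) - F (u j.1) - ⟪gradF (u j.1), u (j.1 + 1) - u j.1⟫ +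
          ⟪v j, u (j.1 + 1)⟫ : ℝ) : EReal) + G j (B j (u (j.1 + 1))) ≤
        ((F x - F (u j.1) - ⟪gradF (u j.1), x - u j.1⟫ + ⟪v j, x⟫ : ℝ) : EReal) + G j (B j x))
    (hpmin : ∀ (j : Fin J) (pj : W j),
      fenchelConjR F (-(Bt j (p' j)) - (∑ i ∈ Finset.univ.filter (· < j), Bt i (p' i)) -
          ∑ i ∈ Finset.univ.filter (j < ·), Bt i (p i)) + fenchelConj (G j) (p' j) ≤
        fenchelConjR F (-(Bt j pj) - (∑ i ∈ Finset.univ.filter (· < j), Bt i (p' i)) -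
          ∑ i ∈ Finset.univ.filter (j < ·), Bt i (p i)) + fenchelConj (G j) pj)
    (hu : gradF (u 0) = -∑ j, Bt j (p j)) (hv : ∀ j, v j = -Bt j (p j)) :
    ∀ k ≤ J, gradF (u k) = -spliceSum (fun i => Bt i (p' i)) (fun i => Bt i (p i)) k := by
  intro k
  induction k with
  | zero => exact fun _ => by rw [hu, spliceSum_zero]
  | succ k ih =>
    intro hk
    obtain ⟨j, rfl⟩ : ∃ j : Fin J, j.1 = k := ⟨⟨k, hk⟩, rfl⟩
    set ctx := spliceContext (fun i => Bt i (p' i)) (fun i => Bt i (p i)) j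
    have hctx : ∀ pj : W j, -(Bt j pj) - (∑ i ∈ Finset.univ.filter (· < j), Bt i (p' i)) -
        ∑ i ∈ Finset.univ.filter (j < ·), Bt i (p i) = -ctx - Bt j pj := by
      intro pj
      simp only [ctx, spliceContext]
      abel
    have hu₀ : gradF (u j.1) = -ctx - Bt j (p j) := by
      rw [ih (Nat.le_of_succ_le hk), spliceSum_val, neg_add', sub_eq_add_neg]
    have hstep := eq_gradFstar_of_peacemanRachford_step (hadj j) (hG j).1 (hG j).2.1 (hG j).2.2
      hgrad hsc hμ hinv hu₀ (by simpa only [hv] using humin j) (by simpa only [hctx] using hpmin j)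
    rw [hstep, hinv, spliceSum_val_add_one, neg_add', sub_eq_add_neg]

end PeacemanRachford

/-- `u n j` is the intermediate iterate `u⁽ⁿ'ʲ⁾` (`0 ≤ j ≤ J`), so that `u⁽ⁿ⁾ = u n 0`. -/
theorem generalized_peaceman_rachford_is_dualization_of_ssc_general
    {V : Type*} [NormedAddCommGroup V] [InnerProductSpace ℝ V] [FiniteDimensional ℝ V]
    (J : ℕ) (W : Fin J → Type*)
    [∀ j, NormedAddCommGroup (W j)] [∀ j, InnerProductSpace ℝ (W j)]
    [∀ j, FiniteDimensional ℝ (W j)]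
    (B : ∀ j : Fin J, V →ₗ[ℝ] W j) (Bt : ∀ j : Fin J, W j →ₗ[ℝ] V)
    (hadj : ∀ (j : Fin J) (v : V) (w : W j), ⟪B j v, w⟫ = ⟪v, Bt j w⟫)
    (G : ∀ j : Fin J, W j → EReal)
    (hG : ∀ j, ProperFn (G j) ∧ ConvexFn (G j) ∧ LowerSemicontinuous (G j))
    -- `F` is differentiable, strongly convex, with Lipschitz gradient; `∇F` is a bijection
    -- with inverse `∇F* = gradFstar`
    (F : V → ℝ) (gradF gradFstar : V → V)
    (hgrad : ∀ x : V, HasGradientAt F (gradF x) x)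
    (μ : ℝ) (hμ : 0 < μ) (hsc : StrongConvexOn Set.univ μ F)
    (hinv₁ : Function.LeftInverse gradFstar gradF)
    (hinv₂ : Function.RightInverse gradFstar gradF)
    -- generalized Peaceman–Rachford iterates
    (u : ℕ → ℕ → V) (v : ℕ → Fin J → V)
    (humin : ∀ (n : ℕ) (j : Fin J), ∀ x : V,
      ((F (u n (j.1 + 1)) - F (u n j.1) - ⟪gradF (u n j.1), u n (j.1 + 1) - u n j.1⟫ +
          ⟪v n j, u n (j.1 + 1)⟫ : ℝ) : EReal) + G j (B j (u n (j.1 + 1))) ≤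
        ((F x - F (u n j.1) - ⟪gradF (u n j.1), x - u n j.1⟫ + ⟪v n j, x⟫ : ℝ) : EReal) +
          G j (B j x))
    (hvrec : ∀ (n : ℕ) (j : Fin J),
      v (n + 1) j = v n j + gradF (u n (j.1 + 1)) - gradF (u n j.1))
    (huchain : ∀ n : ℕ, u (n + 1) 0 = u n J)
    -- SSC (block Gauss–Seidel) iterates for the dual problem
    (p : ℕ → ∀ j : Fin J, W j)
    (hpmin : ∀ (n : ℕ) (j : Fin J), ∀ pj : W j,
      fenchelConjR F (-(Bt j (p (n + 1) j)) -
          (∑ i ∈ Finset.univ.filter (· < j), Bt i (p (n + 1) i)) -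
          ∑ i ∈ Finset.univ.filter (j < ·), Bt i (p n i)) + fenchelConj (G j) (p (n + 1) j) ≤
        fenchelConjR F (-(Bt j pj) -
            (∑ i ∈ Finset.univ.filter (· < j), Bt i (p (n + 1) i)) -
            ∑ i ∈ Finset.univ.filter (j < ·), Bt i (p n i)) + fenchelConj (G j) pj)
    -- initial conditions
    (hinitu : u 0 0 = gradFstar (-(∑ j, Bt j (p 0 j))))
    (hinitv : ∀ j, v 0 j = -(Bt j (p 0 j))) :
    ∀ n : ℕ, 1 ≤ n →
      u n 0 = gradFstar (-(∑ j, Bt j (p n j))) ∧ ∀ j, v n j = -(Bt j (p n j)) := by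
  have : CompleteSpace V := FiniteDimensional.complete ℝ V
  have : ∀ j, CompleteSpace (W j) := fun j => FiniteDimensional.complete ℝ (W j)
  have hdual : ∀ n, gradF (u n 0) = -(∑ j, Bt j (p n j)) ∧ ∀ j, v n j = -(Bt j (p n j)) := by
    intro n
    induction n with
    | zero => exact ⟨by rw [hinitu, hinv₂], hinitv⟩
    | succ n ih =>
      have hsweep := gradF_peacemanRachford_sweep hadj hG hgrad hsc hμ hinv₂ (humin n) (hpmin n)
        ih.1 ih.2
      refine ⟨by rw [huchain, hsweep J le_rfl, spliceSum_self], fun j => ?_⟩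
      rw [hvrec, ih.2, hsweep _ j.is_lt, hsweep _ j.is_lt.le, spliceSum_val, spliceSum_val_add_one]
      abel
  exact fun n _ => ⟨by rw [← (hdual n).1, hinv₁], (hdual n).2⟩

/-- Theorem 5.2. The generalized Peaceman–Rachford splitting algorithm for
`min F(u) + Σⱼ Gⱼ(Bⱼu)` is a dualization of the successive subspace correction (block
Gauss–Seidel) method applied to the dual problem `min F*(−Σⱼ Bⱼᵗpⱼ) + Σⱼ Gⱼ*(pⱼ)`: if
`u⁽⁰⁾ = ∇F*(−Σⱼ Bⱼᵗpⱼ⁽⁰⁾)` and `vⱼ⁽⁰⁾ = −Bⱼᵗpⱼ⁽⁰⁾`, then `u⁽ⁿ⁾ = ∇F*(−Σⱼ Bⱼᵗpⱼ⁽ⁿ⁾)`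
and `vⱼ⁽ⁿ⁾ = −Bⱼᵗpⱼ⁽ⁿ⁾` for all `n ≥ 1`.
Here `u n j` denotes the intermediate iterate `u⁽ⁿ⁺ʲᐟᴶ⁾` (`0 ≤ j ≤ J`, `u⁽ⁿ⁾ = u n 0`). -/
theorem generalized_peaceman_rachford_is_dualization_of_ssc
    {V : Type*} [NormedAddCommGroup V] [InnerProductSpace ℝ V] [FiniteDimensional ℝ V]
    (J : ℕ) (W : Fin J → Type*)
    [∀ j, NormedAddCommGroup (W j)] [∀ j, InnerProductSpace ℝ (W j)]
    [∀ j, FiniteDimensional ℝ (W j)]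
    (B : ∀ j : Fin J, V →ₗ[ℝ] W j) (Bt : ∀ j : Fin J, W j →ₗ[ℝ] V)
    (hadj : ∀ (j : Fin J) (v : V) (w : W j), ⟪B j v, w⟫ = ⟪v, Bt j w⟫)
    (G : ∀ j : Fin J, W j → EReal)
    (hG : ∀ j, ProperFn (G j) ∧ ConvexFn (G j) ∧ LowerSemicontinuous (G j))
    -- `F` is differentiable, strongly convex, with Lipschitz gradient; `∇F` is a bijection
    -- with inverse `∇F* = gradFstar`
    (F : V → ℝ) (gradF gradFstar : V → V)
    (hgrad : ∀ x : V, HasGradientAt F (gradF x) x)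
    (μ : ℝ) (hμ : 0 < μ) (hsc : StrongConvexOn Set.univ μ F)
    (L : NNReal) (hlip : LipschitzWith L gradF)
    (hinv₁ : Function.LeftInverse gradFstar gradF)
    (hinv₂ : Function.RightInverse gradFstar gradF)
    -- generalized Peaceman–Rachford iterates
    (u : ℕ → ℕ → V) (v : ℕ → Fin J → V)
    (humin : ∀ (n : ℕ) (j : Fin J), ∀ x : V,
      ((F (u n (j.1 + 1)) - F (u n j.1) - ⟪gradF (u n j.1), u n (j.1 + 1) - u n j.1⟫ +
          ⟪v n j, u n (j.1 + 1)⟫ : ℝ) : EReal) + G j (B j (u n (j.1 + 1))) ≤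
        ((F x - F (u n j.1) - ⟪gradF (u n j.1), x - u n j.1⟫ + ⟪v n j, x⟫ : ℝ) : EReal) +
          G j (B j x))
    (hvrec : ∀ (n : ℕ) (j : Fin J),
      v (n + 1) j = v n j + gradF (u n (j.1 + 1)) - gradF (u n j.1))
    (huchain : ∀ n : ℕ, u (n + 1) 0 = u n J)
    -- SSC (block Gauss–Seidel) iterates for the dual problem
    (p : ℕ → ∀ j : Fin J, W j)
    (hpmin : ∀ (n : ℕ) (j : Fin J), ∀ pj : W j,
      fenchelConjR F (-(Bt j (p (n + 1) j)) -
          (∑ i ∈ Finset.univ.filter (· < j), Bt i (p (n + 1) i)) -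
          ∑ i ∈ Finset.univ.filter (j < ·), Bt i (p n i)) + fenchelConj (G j) (p (n + 1) j) ≤
        fenchelConjR F (-(Bt j pj) -
            (∑ i ∈ Finset.univ.filter (· < j), Bt i (p (n + 1) i)) -
            ∑ i ∈ Finset.univ.filter (j < ·), Bt i (p n i)) + fenchelConj (G j) pj)
    -- initial conditions
    (hinitu : u 0 0 = gradFstar (-(∑ j, Bt j (p 0 j))))
    (hinitv : ∀ j, v 0 j = -(Bt j (p 0 j))) :
    ∀ n : ℕ, 1 ≤ n →
      u n 0 = gradFstar (-(∑ j, Bt j (p n j))) ∧ ∀ j, v n j = -(Bt j (p n j)) :=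
  generalized_peaceman_rachford_is_dualization_of_ssc_general J W B Bt hadj G hG F gradF gradFstar
    hgrad μ hμ hsc hinv₁ hinv₂ u v humin hvrec huchain p hpmin hinitu hinitv
end
end

section
/- Define u_j^{(n+1)} by the relation −B_jᵗλ^{(n)} ∈ ∂F_j(u_j^{(n+1)}). Then the dualization-based parallel ADMM is a dualization of the parallel Douglas–Rachford splitting algorithm applied to the dual problem min_{p∈V_J} (1/(2β))‖p‖² + ⟨g,p⟩ + Σ_{j=1}^{J−1} F_j*(−B_jᵗp): if v_j^{(0)} = q_j^{(0)} for all j and λ^{(0)} = p^{(0)}, then v_j^{(n)} = q_j^{(n)} for all 1 ≤ j ≤ J−1 and λ^{(n)} = p^{(n)} for all n ≥ 1. -/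
/-!
The two iterations agree step by step, by induction on `n`. If `uⱼ` minimizes the augmented
Lagrangian `Fⱼ(u) + ⟨λ, Bⱼu⟩ + (β/2)‖Bⱼu − vⱼ‖²`, its first-order condition says
`−Bⱼᵗw ∈ ∂Fⱼ(uⱼ)` for `w = λ + β(Bⱼuⱼ − vⱼ)`. The Fenchel–Young inequality at `uⱼ` then bounds the
dual proximal objective `(1/(2β))‖p − λ‖² + ⟨vⱼ, p⟩ + Fⱼ*(−Bⱼᵗp)` below by a quadratic with
vertex `w`, with equality at `w`, so the Douglas–Rachford point `pⱼ` is `w`. Substituting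
`pⱼ = λ + β(Bⱼuⱼ − vⱼ)` into the Douglas–Rachford updates yields the ADMM updates.
-/

open scoped RealInnerProductSpace

noncomputable section

/-- The subdifferential of an extended-real-valued function. -/
def subdiff {E : Type*} [NormedAddCommGroup E] [InnerProductSpace ℝ E]
    (F : E → EReal) (u : E) : Set E :=
  {x | ∀ v : E, F u + ((⟪x, v - u⟫ : ℝ) : EReal) ≤ F v}

open Filter

theorem ProperFn.exists_eq_coe {E : Type*} {F : E → EReal} (hF : ProperFn F) {u : E}
    (hu : F u ≠ ⊤) : ∃ a : ℝ, F u = a :=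
  ⟨(F u).toReal, (EReal.coe_toReal hu (hF.2 u)).symm⟩

theorem ne_top_of_forall_le_add {E : Type*} {F : E → EReal} (hF : ∃ x, F x ≠ ⊤) {h : E → ℝ}
    {u : E} (hmin : ∀ x, F u + h u ≤ F x + h x) : F u ≠ ⊤ := by
  obtain ⟨x, hx⟩ := hF
  intro hu
  have := hmin x
  rw [hu, EReal.top_add_coe, top_le_iff] at this
  exact EReal.add_ne_top hx (EReal.coe_ne_top _) this

theorem eq_of_forall_le_of_quadratic_minorant {E : Type*} [NormedAddCommGroup E]
    {Φ : E → EReal} {w p : E} {m α : ℝ} (hα : 0 < α)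
    (hlow : ∀ x, ((m + α * ‖x - w‖ ^ 2 : ℝ) : EReal) ≤ Φ x) (hw : Φ w ≤ m)
    (hp : ∀ x, Φ p ≤ Φ x) : p = w := by
  have h : m + α * ‖p - w‖ ^ 2 ≤ m := EReal.coe_le_coe_iff.mp (((hlow p).trans (hp w)).trans hw)
  have : ‖p - w‖ ^ 2 ≤ 0 := by nlinarith
  exact sub_eq_zero.mp (norm_eq_zero.mp (pow_eq_zero_iff two_ne_zero |>.mp
    (le_antisymm this (sq_nonneg _))))

section

variable {E : Type*} [NormedAddCommGroup E] [InnerProductSpace ℝ E]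

theorem inner_sub_le_fenchelConj (F : E → EReal) (y x : E) :
    ((⟪y, x⟫ : ℝ) : EReal) - F x ≤ fenchelConj F y :=
  le_iSup (fun x => ((⟪y, x⟫ : ℝ) : EReal) - F x) x

theorem fenchelConj_eq_of_mem_subdiff {F : E → EReal} {u y : E} {a : ℝ} (ha : F u = a)
    (hy : y ∈ subdiff F u) : fenchelConj F y = ((⟪y, u⟫ - a : ℝ) : EReal) := by
  refine le_antisymm (iSup_le fun x => EReal.sub_le_of_le_add ?_) ?_
  · calc ((⟪y, x⟫ : ℝ) : EReal)
        = ((⟪y, u⟫ - a : ℝ) : EReal) + (a + ((⟪y, x - u⟫ : ℝ) : EReal)) := by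
          rw [inner_sub_right, ← EReal.coe_add, ← EReal.coe_add]; ring_nf
      _ ≤ ((⟪y, u⟫ - a : ℝ) : EReal) + F x := by gcongr; simpa [ha] using hy x
  · simpa [ha] using inner_sub_le_fenchelConj F y u

theorem neg_mem_subdiff_of_forall_le_add {F : E → EReal} (hF : ProperFn F)
    (hconv : ConvexFn F) {h : E → ℝ} {u y : E} (hmin : ∀ x, F u + h u ≤ F x + h x)
    (hderiv : ∀ d, HasDerivAt (fun t : ℝ => h (u + t • d)) ⟪y, d⟫ 0) :
    -y ∈ subdiff F u := by
  obtain ⟨a, ha⟩ := hF.exists_eq_coe (ne_top_of_forall_le_add hF.1 hmin)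
  intro x
  rcases eq_or_ne (F x) ⊤ with hx | hx
  · rw [hx]; exact le_top
  obtain ⟨b, hb⟩ := hF.exists_eq_coe hx
  -- convexity bounds the difference quotient of `h` along the segment from `u` to `x`
  have hslope : ∀ t ∈ Set.Ioo (0 : ℝ) 1, a - b ≤ t⁻¹ • (h (u + t • (x - u)) - h u) := by
    rintro t ⟨ht0, ht1⟩
    have hseg : (1 - t) • u + t • x = u + t • (x - u) := by module
    have h1 := hmin ((1 - t) • u + t • x)
    have h2 := hconv u x t ht0.le ht1.le
    rw [hseg, ha] at h1 h2
    rw [hb] at h2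
    have h3 : a + h u ≤ (1 - t) * a + t * b + h (u + t • (x - u)) := by
      exact_mod_cast h1.trans (add_le_add h2 le_rfl)
    rw [smul_eq_mul, le_inv_mul_iff₀ ht0]
    linarith
  have hlim := (hderiv (x - u)).tendsto_slope_zero_right
  simp only [zero_add, zero_smul, add_zero] at hlim
  have hab : a - b ≤ ⟪y, x - u⟫ :=
    ge_of_tendsto hlim (eventually_of_mem (Ioo_mem_nhdsGT one_pos) hslope)
  rw [ha, hb, inner_neg_left, ← EReal.coe_add, EReal.coe_le_coe_iff]
  linarith

theorem hasDerivAt_inner_add_half_mul_norm_sq_line (lam v z d : E) (β : ℝ) :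
    HasDerivAt (fun t : ℝ => ⟪lam, z + t • d⟫ + β / 2 * ‖z + t • d - v‖ ^ 2)
      ⟪lam + β • (z - v), d⟫ 0 := by
  have hline : HasDerivAt (fun t : ℝ => z + t • d) d 0 := by
    simpa using ((hasDerivAt_id (0 : ℝ)).smul_const d).const_add z
  have := ((hasDerivAt_const (0 : ℝ) lam).inner ℝ hline).add
    (((hline.sub_const v).norm_sq).const_mul (β / 2))
  refine this.congr_deriv ?_
  simp only [zero_smul, add_zero, inner_zero_left, inner_add_left, real_inner_smul_left]
  ring

theorem half_inv_mul_norm_sub_sq_add_inner {β : ℝ} (hβ : β ≠ 0) (a c x : E) :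
    1 / (2 * β) * ‖x - a‖ ^ 2 + ⟪c, x⟫ =
      1 / (2 * β) * ‖x - (a - β • c)‖ ^ 2 + (⟪c, a⟫ - β / 2 * ‖c‖ ^ 2) := by
  rw [sub_sub_eq_add_sub, add_sub_right_comm, norm_add_sq_real, norm_smul, real_inner_smul_right,
    Real.norm_eq_abs, mul_pow, sq_abs, inner_sub_left, real_inner_comm c x, real_inner_comm a c]
  field_simp
  ring

end

section

variable {V Z : Type*} [NormedAddCommGroup V] [InnerProductSpace ℝ V]
  [NormedAddCommGroup Z] [InnerProductSpace ℝ Z] {F : V → EReal} {B : V →ₗ[ℝ] Z}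
  {Bt : Z →ₗ[ℝ] V}

theorem neg_adjoint_mem_subdiff_of_isMin_augmented (hF : ProperFn F) (hconv : ConvexFn F)
    (hadj : ∀ x z, ⟪B x, z⟫ = ⟪x, Bt z⟫) {β : ℝ} {lam v : Z} {u : V}
    (humin : ∀ x, F u + ((⟪lam, B u⟫ + β / 2 * ‖B u - v‖ ^ 2 : ℝ) : EReal) ≤
      F x + ((⟪lam, B x⟫ + β / 2 * ‖B x - v‖ ^ 2 : ℝ) : EReal)) :
    -(Bt (lam + β • (B u - v))) ∈ subdiff F u := by
  refine neg_mem_subdiff_of_forall_le_add (h := fun x => ⟪lam, B x⟫ + β / 2 * ‖B x - v‖ ^ 2)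
    hF hconv humin fun d => ?_
  rw [real_inner_comm, ← hadj, real_inner_comm]
  simpa only [map_add, map_smul] using
    hasDerivAt_inner_add_half_mul_norm_sq_line lam v (B u) (B d) β

theorem dual_prox_eq_of_mem_subdiff (hadj : ∀ x z, ⟪B x, z⟫ = ⟪x, Bt z⟫) {β : ℝ} (hβ : 0 < β)
    {lam v : Z} {u : V} {a : ℝ} (ha : F u = a)
    (hsub : -(Bt (lam + β • (B u - v))) ∈ subdiff F u)
    {p : Z} (hp : ∀ x, ((1 / (2 * β) * ‖p - lam‖ ^ 2 + ⟪v, p⟫ : ℝ) : EReal) +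
        fenchelConj F (-(Bt p)) ≤
      ((1 / (2 * β) * ‖x - lam‖ ^ 2 + ⟪v, x⟫ : ℝ) : EReal) + fenchelConj F (-(Bt x))) :
    p = lam + β • (B u - v) := by
  set w := lam + β • (B u - v)
  set m := ⟪v - B u, lam⟫ - β / 2 * ‖v - B u‖ ^ 2 - a
  -- Fenchel–Young at `u` bounds the dual objective below by a quadratic with vertex `w`
  have hquad : ∀ x, 1 / (2 * β) * ‖x - lam‖ ^ 2 + ⟪v, x⟫ + (⟪-(Bt x), u⟫ - a) =
      m + 1 / (2 * β) * ‖x - w‖ ^ 2 := by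
    intro x
    have hw : lam - β • (v - B u) = w := by module
    have hinner : ⟪-(Bt x), u⟫ = -⟪B u, x⟫ := by rw [inner_neg_left, hadj, real_inner_comm u]
    calc 1 / (2 * β) * ‖x - lam‖ ^ 2 + ⟪v, x⟫ + (⟪-(Bt x), u⟫ - a)
        = 1 / (2 * β) * ‖x - lam‖ ^ 2 + ⟪v - B u, x⟫ - a := by
          rw [hinner, inner_sub_left]; ring
      _ = m + 1 / (2 * β) * ‖x - w‖ ^ 2 := by
          rw [half_inv_mul_norm_sub_sq_add_inner hβ.ne', hw]; ring
  refine eq_of_forall_le_of_quadratic_minorant (m := m) (α := 1 / (2 * β))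
    (Φ := fun x =>
      ((1 / (2 * β) * ‖x - lam‖ ^ 2 + ⟪v, x⟫ : ℝ) : EReal) + fenchelConj F (-(Bt x)))
    (by positivity) (fun x => ?_) ?_ hp
  · rw [← hquad x, EReal.coe_add]
    exact add_le_add le_rfl (by simpa [ha] using inner_sub_le_fenchelConj F (-(Bt x)) u)
  · rw [fenchelConj_eq_of_mem_subdiff ha hsub, ← EReal.coe_add, hquad, sub_self, norm_zero]
    simp

theorem dual_prox_eq_of_isMin_augmented (hF : ProperFn F) (hconv : ConvexFn F)
    (hadj : ∀ x z, ⟪B x, z⟫ = ⟪x, Bt z⟫) {β : ℝ} (hβ : 0 < β) {lam v : Z} {u : V}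
    (humin : ∀ x, F u + ((⟪lam, B u⟫ + β / 2 * ‖B u - v‖ ^ 2 : ℝ) : EReal) ≤
      F x + ((⟪lam, B x⟫ + β / 2 * ‖B x - v‖ ^ 2 : ℝ) : EReal))
    {p : Z} (hp : ∀ x, ((1 / (2 * β) * ‖p - lam‖ ^ 2 + ⟪v, p⟫ : ℝ) : EReal) +
        fenchelConj F (-(Bt p)) ≤
      ((1 / (2 * β) * ‖x - lam‖ ^ 2 + ⟪v, x⟫ : ℝ) : EReal) + fenchelConj F (-(Bt x))) :
    p = lam + β • (B u - v) := by
  obtain ⟨a, ha⟩ := hF.exists_eq_coe <|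
    ne_top_of_forall_le_add (h := fun x => ⟪lam, B x⟫ + β / 2 * ‖B x - v‖ ^ 2) hF.1 humin
  exact dual_prox_eq_of_mem_subdiff hadj hβ ha
    (neg_adjoint_mem_subdiff_of_isMin_augmented hF hconv hadj humin) hp

end

/-- `Jm` is the number `J − 1` of blocks and `Z` the last space `V_J`. -/
theorem dualization_based_parallel_admm_is_dualization_of_parallel_dr_general
    (Jm : ℕ) {Z : Type*}
    [NormedAddCommGroup Z] [InnerProductSpace ℝ Z]
    (Vb : Fin Jm → Type*)
    [∀ j, NormedAddCommGroup (Vb j)] [∀ j, InnerProductSpace ℝ (Vb j)]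
    (F : ∀ j : Fin Jm, Vb j → EReal)
    (hF : ∀ j, ProperFn (F j) ∧ ConvexFn (F j) ∧ LowerSemicontinuous (F j))
    (B : ∀ j : Fin Jm, Vb j →ₗ[ℝ] Z) (Bt : ∀ j : Fin Jm, Z →ₗ[ℝ] Vb j)
    (hadj : ∀ (j : Fin Jm) (x : Vb j) (z : Z), ⟪B j x, z⟫ = ⟪x, Bt j z⟫)
    (β τ : ℝ) (hβ : 0 < β)
    -- dualization-based parallel ADMM iterates
    (v : ℕ → Fin Jm → Z) (lam : ℕ → Z) (u : ℕ → ∀ j : Fin Jm, Vb j)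
    (humin : ∀ (n : ℕ) (j : Fin Jm), ∀ x : Vb j,
      F j (u (n + 1) j) + ((⟪lam n, B j (u (n + 1) j)⟫ +
          β / 2 * ‖B j (u (n + 1) j) - v n j‖ ^ 2 : ℝ) : EReal) ≤
        F j x + ((⟪lam n, B j x⟫ + β / 2 * ‖B j x - v n j‖ ^ 2 : ℝ) : EReal))
    (hvrec : ∀ (n : ℕ) (j : Fin Jm),
      v (n + 1) j = (1 - τ) • v n j + τ • B j (u (n + 1) j))
    (hlamrec : ∀ n : ℕ,
      lam (n + 1) = lam n + (τ * β) • ∑ j, (B j (u (n + 1) j) - v n j))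
    -- parallel Douglas–Rachford iterates for the dual problem
    (p : ℕ → Z) (pj : ℕ → Fin Jm → Z) (q : ℕ → Fin Jm → Z)
    (hpjmin : ∀ (n : ℕ) (j : Fin Jm), ∀ x : Z,
      ((1 / (2 * β) * ‖pj (n + 1) j - p n‖ ^ 2 + ⟪q n j, pj (n + 1) j⟫ : ℝ) : EReal) +
        fenchelConj (F j) (-(Bt j (pj (n + 1) j))) ≤
      ((1 / (2 * β) * ‖x - p n‖ ^ 2 + ⟪q n j, x⟫ : ℝ) : EReal) +
        fenchelConj (F j) (-(Bt j x)))
    (hqrec : ∀ (n : ℕ) (j : Fin Jm),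
      q (n + 1) j = q n j + (τ / β) • (pj (n + 1) j - p n))
    (hprec : ∀ n : ℕ, p (n + 1) = (1 - τ * Jm) • p n + τ • ∑ j, pj (n + 1) j)
    -- initial conditions
    (hinitv : ∀ j, v 0 j = q 0 j) (hinitlam : lam 0 = p 0) :
    ∀ n : ℕ, 1 ≤ n → (∀ j, v n j = q n j) ∧ lam n = p n := by
  suffices h : ∀ n, (∀ j, v n j = q n j) ∧ lam n = p n from fun n _ => h n
  intro n
  induction n with
  | zero => exact ⟨hinitv, hinitlam⟩
  | succ n ih =>
    obtain ⟨hv, hlam⟩ := ih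
    have hpj : ∀ j, pj (n + 1) j = lam n + β • (B j (u (n + 1) j) - v n j) := fun j =>
      dual_prox_eq_of_isMin_augmented (hF j).1 (hF j).2.1 (hadj j) hβ (humin n j)
        (by simpa only [← hv j, ← hlam] using hpjmin n j)
    refine ⟨fun j => ?_, ?_⟩
    · rw [hvrec, hqrec, hpj, hv j, hlam, add_sub_cancel_left, smul_smul,
        div_mul_cancel₀ τ hβ.ne']
      module
    · simp only [hlamrec, hprec, hpj, Finset.sum_add_distrib, Finset.sum_const, Finset.card_univ,
        Fintype.card_fin, ← Finset.smul_sum, ← Nat.cast_smul_eq_nsmul ℝ, hlam]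
      module

/-- Theorem 6.4. The dualization-based parallel ADMM is a dualization of
the parallel Douglas–Rachford splitting algorithm applied to the dual problem
`min (1/(2β))‖p‖² + ⟨g,p⟩ + Σⱼ Fⱼ*(−Bⱼᵗp)`: if `vⱼ⁽⁰⁾ = qⱼ⁽⁰⁾` for all `j` and
`λ⁽⁰⁾ = p⁽⁰⁾`, then `vⱼ⁽ⁿ⁾ = qⱼ⁽ⁿ⁾` for all `j` and `λ⁽ⁿ⁾ = p⁽ⁿ⁾` for all `n ≥ 1`.
`Jm` denotes the number `J−1` of blocks and `Z` the last space `V_J`; the sequence `u` is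
defined by the dualization relation `−Bⱼᵗλ⁽ⁿ⁾ ∈ ∂Fⱼ(uⱼ⁽ⁿ⁺¹⁾)`. -/
theorem dualization_based_parallel_admm_is_dualization_of_parallel_dr
    (Jm : ℕ) {Z : Type*}
    [NormedAddCommGroup Z] [InnerProductSpace ℝ Z] [FiniteDimensional ℝ Z]
    (Vb : Fin Jm → Type*)
    [∀ j, NormedAddCommGroup (Vb j)] [∀ j, InnerProductSpace ℝ (Vb j)]
    [∀ j, FiniteDimensional ℝ (Vb j)]
    (F : ∀ j : Fin Jm, Vb j → EReal)
    (hF : ∀ j, ProperFn (F j) ∧ ConvexFn (F j) ∧ LowerSemicontinuous (F j))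
    (B : ∀ j : Fin Jm, Vb j →ₗ[ℝ] Z) (Bt : ∀ j : Fin Jm, Z →ₗ[ℝ] Vb j)
    (hadj : ∀ (j : Fin Jm) (x : Vb j) (z : Z), ⟪B j x, z⟫ = ⟪x, Bt j z⟫)
    (g : Z) (β τ : ℝ) (hβ : 0 < β) (hτ : 0 < τ)
    -- dualization-based parallel ADMM iterates
    (v : ℕ → Fin Jm → Z) (lam : ℕ → Z) (u : ℕ → ∀ j : Fin Jm, Vb j)
    (humin : ∀ (n : ℕ) (j : Fin Jm), ∀ x : Vb j,
      F j (u (n + 1) j) + ((⟪lam n, B j (u (n + 1) j)⟫ +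
          β / 2 * ‖B j (u (n + 1) j) - v n j‖ ^ 2 : ℝ) : EReal) ≤
        F j x + ((⟪lam n, B j x⟫ + β / 2 * ‖B j x - v n j‖ ^ 2 : ℝ) : EReal))
    (hvrec : ∀ (n : ℕ) (j : Fin Jm),
      v (n + 1) j = (1 - τ) • v n j + τ • B j (u (n + 1) j))
    (hlamrec : ∀ n : ℕ,
      lam (n + 1) = lam n + (τ * β) • ∑ j, (B j (u (n + 1) j) - v n j))
    -- the dualization relation defining the primal sequence `u`
    (hu : ∀ n : ℕ, ∀ j : Fin Jm, -(Bt j (lam n)) ∈ subdiff (F j) (u (n + 1) j))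
    -- parallel Douglas–Rachford iterates for the dual problem
    (p : ℕ → Z) (pj : ℕ → Fin Jm → Z) (q : ℕ → Fin Jm → Z)
    (hpjmin : ∀ (n : ℕ) (j : Fin Jm), ∀ x : Z,
      ((1 / (2 * β) * ‖pj (n + 1) j - p n‖ ^ 2 + ⟪q n j, pj (n + 1) j⟫ : ℝ) : EReal) +
        fenchelConj (F j) (-(Bt j (pj (n + 1) j))) ≤
      ((1 / (2 * β) * ‖x - p n‖ ^ 2 + ⟪q n j, x⟫ : ℝ) : EReal) +
        fenchelConj (F j) (-(Bt j x)))
    (hqrec : ∀ (n : ℕ) (j : Fin Jm),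
      q (n + 1) j = q n j + (τ / β) • (pj (n + 1) j - p n))
    (hprec : ∀ n : ℕ, p (n + 1) = (1 - τ * Jm) • p n + τ • ∑ j, pj (n + 1) j)
    -- initial conditions
    (hinitv : ∀ j, v 0 j = q 0 j) (hinitlam : lam 0 = p 0) :
    ∀ n : ℕ, 1 ≤ n → (∀ j, v n j = q n j) ∧ lam n = p n :=
  dualization_based_parallel_admm_is_dualization_of_parallel_dr_general Jm Vb F hF B Bt hadj β τ hβ
    v lam u humin hvrec hlamrec p pj q hpjmin hqrec hprec hinitv hinitlam
end
end
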